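/- Let T be a finite tree in which every internal node has degree 3, and let W > 0 be a real number. Suppose μ maps ordered pairs of adjacent nodes of T to nonnegative reals such that: (S1) for every pair of adjacent nodes x, y, (9/10)W ≤ μ(x,y) + μ(y,x) ≤ W; (S2) if x is an internal node with neighbors y1, y2, y3, then μ(x,y2) + μ(x,y3) ≤ μ(y1,x) ≤ μ(x,y2) + μ(x,y3) + (1/10)W; (S3) whenever x, y are adjacent and x is a leaf, μ(y,x) < (9/20)W. Then there exists an edge xy of T such that (1/4)W < μ(x,y) < (3/4)W and (1/4)W < μ(y,x) < (3/4)W. -/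

import Mathlib

/-!
Suppose no edge is balanced. Orient each edge `xy` from `x` to `y` when `μ x y > W / 4`; by (S1)
no edge is oriented both ways, since two values above `W / 4` with sum at most `W` are both below
`3W / 4`. A tree has fewer edges than vertices, so some vertex `v` has no outgoing edge: all
`μ v u ≤ W / 4`, hence by (S1) all `μ u v ≥ 13W / 20`. This contradicts (S3) if `v` is a leaf and
the upper bound of (S2) (which gives `μ u v ≤ 6W / 10`) if `v` has degree 3.
-/

open Finset

namespace SimpleGraph

variable {V : Type*} [Fintype V] {G : SimpleGraph V}

theorem exists_forall_adj_not_of_card_edgeFinset_lt [Fintype G.edgeSet]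
    (hcard : #G.edgeFinset < Fintype.card V) (r : V → V → Prop)
    (hr : ∀ x y, G.Adj x y → r x y → ¬ r y x) :
    ∃ v, ∀ u, G.Adj v u → ¬ r v u := by
  by_contra! hout
  choose f hadj hf using hout
  have hinj : Set.InjOn (fun v ↦ s(v, f v)) (univ : Finset V) := by
    intro u _ v _ huv
    rcases Sym2.eq_iff.mp huv with ⟨h, -⟩ | ⟨hu, hv⟩
    · exact h
    · have huv := hf u
      have hvu := hf v
      rw [hv] at huv
      rw [← hu] at hvu
      exact absurd hvu (hr u v (hv ▸ hadj u) huv)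
  have hmaps : ∀ v ∈ (univ : Finset V), s(v, f v) ∈ G.edgeFinset :=
    fun v _ ↦ mem_edgeFinset.mpr (hadj v)
  have := card_le_card_of_injOn _ hmaps hinj
  rw [card_univ] at this
  omega

theorem IsTree.exists_forall_adj_not [Fintype G.edgeSet] (hT : G.IsTree) (r : V → V → Prop)
    (hr : ∀ x y, G.Adj x y → r x y → ¬ r y x) :
    ∃ v, ∀ u, G.Adj v u → ¬ r v u :=
  exists_forall_adj_not_of_card_edgeFinset_lt (by have := hT.card_edgeFinset; omega) r hr

theorem exists_adj_adj_adj_of_degree_eq_three [DecidableRel G.Adj] {v : V}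
    (hv : G.degree v = 3) :
    ∃ a b c, G.Adj v a ∧ G.Adj v b ∧ G.Adj v c ∧ a ≠ b ∧ a ≠ c ∧ b ≠ c := by
  classical
  rw [← card_neighborFinset_eq_degree] at hv
  obtain ⟨a, b, c, hab, hac, hbc, habc⟩ := card_eq_three.mp hv
  have hmem : ∀ w ∈ ({a, b, c} : Finset V), G.Adj v w := fun w hw ↦ by
    rwa [← habc, mem_neighborFinset] at hw
  exact ⟨a, b, c, hmem a (by simp), hmem b (by simp), hmem c (by simp), hab, hac, hbc⟩

end SimpleGraph

theorem stmt_0_general {V : Type*} [Fintype V] [Nontrivial V]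
    (G : SimpleGraph V) [DecidableRel G.Adj] (hT : G.IsTree)
    (hdeg : ∀ v : V, 2 ≤ G.degree v → G.degree v = 3)
    (W : ℝ) (hW : 0 < W) (μ : V → V → ℝ)
    (hS1 : ∀ x y, G.Adj x y →
      9/10 * W ≤ μ x y + μ y x ∧ μ x y + μ y x ≤ W)
    (hS2 : ∀ x y₁ y₂ y₃, G.Adj x y₁ → G.Adj x y₂ → G.Adj x y₃ →
      y₁ ≠ y₂ → y₁ ≠ y₃ → y₂ ≠ y₃ →
      μ x y₂ + μ x y₃ ≤ μ y₁ x ∧ μ y₁ x ≤ μ x y₂ + μ x y₃ + 1/10 * W)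
    (hS3 : ∀ x y, G.Adj x y → G.degree x = 1 → μ y x < 9/20 * W) :
    ∃ x y, G.Adj x y ∧
      1/4 * W < μ x y ∧ μ x y < 3/4 * W ∧
      1/4 * W < μ y x ∧ μ y x < 3/4 * W := by
  by_contra! hnone
  obtain ⟨v, hv⟩ := hT.exists_forall_adj_not (fun x y ↦ 1/4 * W < μ x y) fun x y hxy hx hy ↦ by
    linarith [(hS1 x y hxy).2, hnone x y hxy hx (by linarith [(hS1 x y hxy).2]) hy]
  have hin : ∀ u, G.Adj v u → 13/20 * W ≤ μ u v := fun u hu ↦ by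
    linarith [(hS1 v u hu).1, not_lt.mp (hv u hu)]
  have hpos := hT.connected.preconnected.degree_pos_of_nontrivial v
  by_cases hleaf : G.degree v = 1
  · obtain ⟨u, hu⟩ := (G.degree_pos_iff_exists_adj v).mp hpos
    linarith [hS3 v u hu hleaf, hin u hu]
  · obtain ⟨a, b, c, ha, hb, hc, hab, hac, hbc⟩ :=
      G.exists_adj_adj_adj_of_degree_eq_three (hdeg v (by omega))
    linarith [(hS2 v a b c ha hb hc hab hac hbc).2, hin a ha, not_lt.mp (hv b hb),
      not_lt.mp (hv c hc)]

/-- Balanced edge in a degree-3 tree with an almost-additive edge measure. -/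
theorem stmt_0 {V : Type*} [Fintype V] [Nontrivial V] [DecidableEq V]
    (G : SimpleGraph V) [DecidableRel G.Adj] (hT : G.IsTree)
    (hdeg : ∀ v : V, 2 ≤ G.degree v → G.degree v = 3)
    (W : ℝ) (hW : 0 < W) (μ : V → V → ℝ)
    (hμ0 : ∀ x y, G.Adj x y → 0 ≤ μ x y)
    (hS1 : ∀ x y, G.Adj x y →
      9/10 * W ≤ μ x y + μ y x ∧ μ x y + μ y x ≤ W)
    (hS2 : ∀ x y₁ y₂ y₃, G.Adj x y₁ → G.Adj x y₂ → G.Adj x y₃ →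
      y₁ ≠ y₂ → y₁ ≠ y₃ → y₂ ≠ y₃ →
      μ x y₂ + μ x y₃ ≤ μ y₁ x ∧ μ y₁ x ≤ μ x y₂ + μ x y₃ + 1/10 * W)
    (hS3 : ∀ x y, G.Adj x y → G.degree x = 1 → μ y x < 9/20 * W) :
    ∃ x y, G.Adj x y ∧
      1/4 * W < μ x y ∧ μ x y < 3/4 * W ∧
      1/4 * W < μ y x ∧ μ y x < 3/4 * W :=
  stmt_0_general G hT hdeg W hW μ hS1 hS2 hS3
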